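/- arXiv:1012.4599 — 3 statements merged into one kernel-verified Lean document; each statement's English description precedes it below -/
import Mathlib

section
/- Let X be a real inner product space and F : [0,∞) × X → X. Suppose (F(t,x), x) ≤ 0 for all x ∈ X and t ≥ 0, and that F(t,x) = A(t,x) + f(t,x,x) where A(t,·) is linear and f(t,·,·) is bilinear with ‖f(t,x,y)‖ ≤ c(t)·‖x‖·‖y‖ for some function c : [0,∞) → ℝ. Then for all x, y ∈ X and t ≥ 0: (F(t,x) − F(t,y), x − y) ≤ 2·c(t)·‖y‖·‖x − y‖². -/
/-!
Writing `z = x - y`, bilinearity gives `F x - F y = F z + f z y + f y z`. Pairing with `z`, the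
term `(F z, z)` is nonpositive and each cross term is at most `c ‖y‖ ‖z‖²` by Cauchy–Schwarz.
-/

open scoped RealInnerProductSpace

theorem LinearMap.add_apply_self_sub_add_apply_self {R M N : Type*} [CommRing R]
    [AddCommGroup M] [Module R M] [AddCommGroup N] [Module R N]
    (A : M →ₗ[R] N) (B : M →ₗ[R] M →ₗ[R] N) (x y : M) :
    (A x + B x x) - (A y + B y y) =
      (A (x - y) + B (x - y) (x - y)) + B (x - y) y + B y (x - y) := by
  simp only [map_sub, LinearMap.sub_apply]
  abel

theorem inner_sub_le_of_linear_add_bilinear {X : Type*} [NormedAddCommGroup X]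
    [InnerProductSpace ℝ X] (A : X →ₗ[ℝ] X) (B : X →ₗ[ℝ] X →ₗ[ℝ] X) {c : ℝ}
    (hneg : ∀ x, ⟪A x + B x x, x⟫ ≤ 0) (hB : ∀ x y, ‖B x y‖ ≤ c * ‖x‖ * ‖y‖) (x y : X) :
    ⟪(A x + B x x) - (A y + B y y), x - y⟫ ≤ 2 * c * ‖y‖ * ‖x - y‖ ^ 2 := by
  set z := x - y
  have hzy : ⟪B z y, z⟫ ≤ c * ‖y‖ * ‖z‖ ^ 2 := calc
    ⟪B z y, z⟫ ≤ ‖B z y‖ * ‖z‖ := real_inner_le_norm _ _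
    _ ≤ c * ‖z‖ * ‖y‖ * ‖z‖ := by gcongr; exact hB z y
    _ = c * ‖y‖ * ‖z‖ ^ 2 := by ring
  have hyz : ⟪B y z, z⟫ ≤ c * ‖y‖ * ‖z‖ ^ 2 := calc
    ⟪B y z, z⟫ ≤ ‖B y z‖ * ‖z‖ := real_inner_le_norm _ _
    _ ≤ c * ‖y‖ * ‖z‖ * ‖z‖ := by gcongr; exact hB y z
    _ = c * ‖y‖ * ‖z‖ ^ 2 := by ring
  rw [A.add_apply_self_sub_add_apply_self B, inner_add_left, inner_add_left]
  linarith [hneg z]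

/-- Remark 4.1: if `(F(t,x),x) ≤ 0` and `F(t,x) = A(t,x) + f(t,x,x)` with `A(t,·)`
linear and `f(t,·,·)` bilinear with `‖f(t,x,y)‖ ≤ c(t)‖x‖‖y‖`, then
`(F(t,x) - F(t,y), x - y) ≤ 2 c(t) ‖y‖ ‖x - y‖²`. -/
theorem stmt1 {X : Type*} [NormedAddCommGroup X] [InnerProductSpace ℝ X]
    (F A : ℝ → X → X) (f : ℝ → X → X → X) (c : ℝ → ℝ)
    (hneg : ∀ t ≥ (0:ℝ), ∀ x : X, (inner ℝ (F t x) x : ℝ) ≤ 0)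
    (hA : ∀ t ≥ (0:ℝ), IsLinearMap ℝ (A t))
    (hf1 : ∀ t ≥ (0:ℝ), ∀ y : X, IsLinearMap ℝ (fun x => f t x y))
    (hf2 : ∀ t ≥ (0:ℝ), ∀ x : X, IsLinearMap ℝ (f t x))
    (hfb : ∀ t ≥ (0:ℝ), ∀ x y : X, ‖f t x y‖ ≤ c t * ‖x‖ * ‖y‖)
    (hdec : ∀ t ≥ (0:ℝ), ∀ x : X, F t x = A t x + f t x x) :
    ∀ t ≥ (0:ℝ), ∀ x y : X,
      (inner ℝ (F t x - F t y) (x - y) : ℝ) ≤ 2 * c t * ‖y‖ * ‖x - y‖ ^ 2 := by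
  intro t ht x y
  let B : X →ₗ[ℝ] X →ₗ[ℝ] X := LinearMap.mk₂ ℝ (f t)
    (fun x₁ x₂ y => (hf1 t ht y).map_add x₁ x₂) (fun r x y => (hf1 t ht y).map_smul r x)
    (fun x y₁ y₂ => (hf2 t ht x).map_add y₁ y₂) (fun r x y => (hf2 t ht x).map_smul r y)
  have hF : ∀ x, F t x = IsLinearMap.mk' (A t) (hA t ht) x + B x x := hdec t ht
  have hnegt := hneg t ht
  simp only [hF] at hnegt ⊢
  exact inner_sub_le_of_linear_add_bilinear _ B hnegt (hfb t ht) x y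
end

section
/- Let X be a real Hilbert space, F : [0,∞) × X → X, and d : [0,∞) × X → ℝ locally bounded, with (F(t,x) − F(t,y), x − y) ≤ d(t,y)·‖x − y‖² for all x, y ∈ X and t ≥ 0. If u, v : [0,T] → X are differentiable with u'(t) = F(t,u(t)), and E(t) := −v'(t) + F(t,v(t)), then for all t ∈ [0,T]: ‖u(t) − v(t)‖² ≤ exp(∫₀ᵗ 2·d(s,v(s)) ds) · [‖u(0) − v(0)‖² + 2·∫₀ᵗ exp(−∫₀ˢ 2·d(ξ,v(ξ)) dξ)·(E(s), u(s) − v(s)) ds], provided t ↦ d(t,v(t)) and t ↦ (E(t), u(t) − v(t)) are integrable on (0,T). -/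
/-!
With `f = ‖u - v‖²`, the one-sided condition gives `f' ≤ L f + M` for `L = 2 d(·, v)` and
`M = 2 (E, u - v)`. As `L` is merely integrable, the integrating factor `exp (-∫ L)` is only
absolutely continuous and cannot be paired with the pointwise derivative of `f`. Instead, after
multiplying `f` by `exp (K t)` so that the coefficient `L + K` becomes nonnegative, `f` is dominated
by the absolutely continuous primitive `R = f(a) + ∫ ((L + K) f + M)`, which satisfies
`R' ≤ (L + K) R + M` almost everywhere; the integrating factor is applied to `R` through the
fundamental theorem of calculus for absolutely continuous functions.
-/

open MeasureTheory Set Filter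

theorem LipschitzOnWith.comp_absolutelyContinuousOnInterval {Y Z : Type*}
    [PseudoMetricSpace Y] [PseudoMetricSpace Z] {g : Y → Z} {K : NNReal} {s : Set Y}
    {f : ℝ → Y} {a b : ℝ} (hg : LipschitzOnWith K g s) (hf : AbsolutelyContinuousOnInterval f a b)
    (hfs : MapsTo f (uIcc a b) s) : AbsolutelyContinuousOnInterval (g ∘ f) a b := by
  unfold AbsolutelyContinuousOnInterval at hf ⊢
  apply squeeze_zero' ?_ ?_ (by simpa using hf.const_mul (K : ℝ))
  · exact Eventually.of_forall fun _ ↦ Finset.sum_nonneg fun _ _ ↦ dist_nonneg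
  rw [eventually_inf_principal]
  filter_upwards with E hE
  rw [Finset.mul_sum]
  gcongr with i hi
  exact hg.dist_le_mul _ (hfs (hE.1 i hi).1) _ (hfs (hE.1 i hi).2)

theorem AbsolutelyContinuousOnInterval.exp {f : ℝ → ℝ} {a b : ℝ}
    (hf : AbsolutelyContinuousOnInterval f a b) :
    AbsolutelyContinuousOnInterval (fun x ↦ Real.exp (f x)) a b := by
  obtain ⟨C, hC⟩ := hf.exists_bound
  obtain ⟨K, hK⟩ := Real.contDiff_exp.contDiffOn.exists_lipschitzOnWith one_ne_zero
    (convex_Icc (-C) C) isCompact_Icc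
  exact hK.comp_absolutelyContinuousOnInterval hf fun x hx ↦ abs_le.1 (hC x hx)

theorem AbsolutelyContinuousOnInterval.le_exp_integral_mul_of_deriv_le {R L M : ℝ → ℝ} {a b : ℝ}
    (hab : a ≤ b) (hR : AbsolutelyContinuousOnInterval R a b)
    (hL : IntervalIntegrable L volume a b) (hM : IntervalIntegrable M volume a b)
    (hRLM : ∀ᵐ x, x ∈ Icc a b → deriv R x ≤ L x * R x + M x) :
    R b ≤ Real.exp (∫ x in a..b, L x) *
      (R a + ∫ x in a..b, Real.exp (-∫ y in a..x, L y) * M x) := by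
  set A : ℝ → ℝ := fun x ↦ ∫ y in a..x, L y
  have hG : AbsolutelyContinuousOnInterval (fun x ↦ Real.exp (-A x)) a b :=
    (hL.absolutelyContinuousOnInterval_intervalIntegral left_mem_uIcc).fun_neg.exp
  have hGM : IntervalIntegrable (fun x ↦ Real.exp (-A x) * M x) volume a b :=
    hM.continuousOn_mul hG.continuousOn
  have hderiv : ∀ᵐ x, x ∈ Icc a b →
      deriv (fun x ↦ Real.exp (-A x) * R x) x ≤ Real.exp (-A x) * M x := by
    filter_upwards [hL.ae_hasDerivAt_integral, hR.ae_differentiableAt, hRLM]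
      with x hA hRx hle hx
    have hx' : x ∈ uIcc a b := by rwa [uIcc_of_le hab]
    have hGR : HasDerivAt (fun x ↦ Real.exp (-A x) * R x)
        (Real.exp (-A x) * -L x * R x + Real.exp (-A x) * deriv R x) x :=
      (hA hx' a left_mem_uIcc).neg.exp.mul (hRx hx').hasDerivAt
    rw [hGR.deriv]
    have := mul_le_mul_of_nonneg_left (hle hx) (Real.exp_pos (-A x)).le
    linarith
  have hFTC := (hG.fun_mul hR).integral_deriv_eq_sub
  have hmono := intervalIntegral.integral_mono_ae_restrict hab
    (hG.fun_mul hR).intervalIntegrable_deriv hGM ((ae_restrict_iff' measurableSet_Icc).2 hderiv)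
  have hA0 : A a = 0 := intervalIntegral.integral_same
  rw [hFTC, hA0, neg_zero, Real.exp_zero, one_mul] at hmono
  calc R b = Real.exp (A b) * (Real.exp (-A b) * R b) := by
        rw [← mul_assoc, ← Real.exp_add, add_neg_cancel, Real.exp_zero, one_mul]
    _ ≤ Real.exp (A b) * (R a + ∫ x in a..b, Real.exp (-A x) * M x) := by
        gcongr; linarith

theorem le_exp_integral_mul_of_le_add_integral {f L M : ℝ → ℝ} {a b : ℝ} (hab : a ≤ b)
    (hL : IntervalIntegrable L volume a b) (hM : IntervalIntegrable M volume a b)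
    (hLf : IntervalIntegrable (fun x ↦ L x * f x) volume a b) (hL0 : ∀ x ∈ Icc a b, 0 ≤ L x)
    (hf : ∀ t ∈ Icc a b, f t ≤ f a + ∫ x in a..t, (L x * f x + M x)) :
    f b ≤ Real.exp (∫ x in a..b, L x) *
      (f a + ∫ x in a..b, Real.exp (-∫ y in a..x, L y) * M x) := by
  set R : ℝ → ℝ := fun t ↦ f a + ∫ x in a..t, (L x * f x + M x)
  have hρ : IntervalIntegrable (fun x ↦ L x * f x + M x) volume a b := hLf.add hM
  have hR : AbsolutelyContinuousOnInterval R a b :=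
    (LipschitzWith.const (f a)).lipschitzOnWith.absolutelyContinuousOnInterval.fun_add
      (hρ.absolutelyContinuousOnInterval_intervalIntegral left_mem_uIcc)
  have hderiv : ∀ᵐ x, x ∈ Icc a b → deriv R x ≤ L x * R x + M x := by
    filter_upwards [hρ.ae_hasDerivAt_integral] with x hx hxI
    rw [((hx (uIcc_of_le hab ▸ hxI) a left_mem_uIcc).const_add (f a)).deriv]
    have := mul_le_mul_of_nonneg_left (hf x hxI) (hL0 x hxI)
    linarith
  have hRa : R a = f a := by simp [R]
  calc f b ≤ R b := hf b ⟨hab, le_rfl⟩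
    _ ≤ _ := hRa ▸ hR.le_exp_integral_mul_of_deriv_le hab hL hM hderiv

theorem le_exp_integral_mul_of_hasDerivAt_le {f f' L M : ℝ → ℝ} {a b K : ℝ} (hab : a ≤ b)
    (hf : ContinuousOn f (Icc a b)) (hf' : ∀ x ∈ Ioo a b, HasDerivAt f (f' x) x)
    (hL : IntegrableOn L (Icc a b)) (hM : IntegrableOn M (Icc a b))
    (hLK : ∀ x ∈ Icc a b, -K ≤ L x) (hle : ∀ x ∈ Ioo a b, f' x ≤ L x * f x + M x) :
    f b ≤ Real.exp (∫ x in a..b, L x) *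
      (f a + ∫ x in a..b, Real.exp (-∫ y in a..x, L y) * M x) := by
  -- the weight `w` shifts the coefficient `L` to the nonnegative `L + K`
  set w : ℝ → ℝ := fun x ↦ Real.exp (K * (x - a))
  have hw : ∀ x, HasDerivAt w (w x * K) x := fun x ↦ by
    simpa using ((hasDerivAt_id x).sub_const a).const_mul K |>.exp
  have hwc : Continuous w := by fun_prop
  have hw0 : ∀ x, 0 < w x := fun x ↦ Real.exp_pos _
  set g : ℝ → ℝ := fun x ↦ w x * f x
  set N : ℝ → ℝ := fun x ↦ w x * M x
  have hg : ContinuousOn g (Icc a b) := hwc.continuousOn.mul hf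
  have hLKint : IntegrableOn (fun x ↦ L x + K) (Icc a b) := hL.add continuous_const.integrableOn_Icc
  have hLg : IntegrableOn (fun x ↦ (L x + K) * g x) (Icc a b) :=
    hLKint.mul_continuousOn hg isCompact_Icc
  have hN : IntegrableOn N (Icc a b) := hM.continuousOn_mul hwc.continuousOn isCompact_Icc
  have hgle : ∀ t ∈ Icc a b, g t ≤ g a + ∫ x in a..t, ((L x + K) * g x + N x) := by
    intro t ht
    have hsub : Icc a t ⊆ Icc a b := Icc_subset_Icc le_rfl ht.2
    have := intervalIntegral.sub_le_integral_of_hasDeriv_right_of_le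
      (φ := fun x ↦ (L x + K) * g x + N x) ht.1 (hg.mono hsub)
      (fun x hx ↦ ((hw x).mul (hf' x ⟨hx.1, hx.2.trans_le ht.2⟩)).hasDerivWithinAt)
      ((hLg.add hN).mono_set hsub) fun x hx ↦ by
        have := mul_le_mul_of_nonneg_left (hle x ⟨hx.1, hx.2.trans_le ht.2⟩) (hw0 x).le
        linear_combination this
    linarith
  have key := le_exp_integral_mul_of_le_add_integral hab
    ((intervalIntegrable_iff_integrableOn_Icc_of_le hab).2 hLKint)
    ((intervalIntegrable_iff_integrableOn_Icc_of_le hab).2 hN)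
    ((intervalIntegrable_iff_integrableOn_Icc_of_le hab).2 hLg)
    (fun x hx ↦ by linarith [hLK x hx]) hgle
  have hshift : ∀ x ∈ Icc a b, ∫ y in a..x, (L y + K) = (∫ y in a..x, L y) + K * (x - a) := by
    intro x hx
    rw [intervalIntegral.integral_add _ intervalIntegrable_const, intervalIntegral.integral_const,
      smul_eq_mul, mul_comm]
    exact (intervalIntegrable_iff_integrableOn_Icc_of_le hx.1).2
      (hL.mono_set (Icc_subset_Icc le_rfl hx.2))
  have hN' : ∫ x in a..b, Real.exp (-∫ y in a..x, (L y + K)) * N x =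
      ∫ x in a..b, Real.exp (-∫ y in a..x, L y) * M x := by
    refine intervalIntegral.integral_congr fun x hx ↦ ?_
    rw [uIcc_of_le hab] at hx
    simp only [hshift x hx, N, w, neg_add, Real.exp_add, Real.exp_neg]
    field_simp
  rw [hshift b ⟨hab, le_rfl⟩, hN', Real.exp_add] at key
  have hga : g a = f a := by simp [g, w]
  rw [hga] at key
  refine le_of_mul_le_mul_left ?_ (hw0 b)
  calc w b * f b ≤ _ := key
    _ = _ := by simp only [w]; ring

theorem exists_abs_le_of_locally_bounded {X : Type*} [NormedAddCommGroup X] {d : ℝ → X → ℝ}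
    {v : ℝ → X} {T : ℝ}
    (hd_loc : ∀ R > (0:ℝ), ∃ C : ℝ, ∀ t ∈ Icc (0:ℝ) R, ∀ y : X, ‖y‖ ≤ R → |d t y| ≤ C)
    (hv : ContinuousOn v (Icc 0 T)) : ∃ C, ∀ t ∈ Icc 0 T, |d t (v t)| ≤ C := by
  obtain ⟨B, hB⟩ := isCompact_Icc.exists_bound_of_continuousOn hv
  obtain ⟨C, hC⟩ := hd_loc (|T| + |B| + 1) (by positivity)
  refine ⟨C, fun t ht ↦ hC t ⟨ht.1, ?_⟩ (v t) ?_⟩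
  · linarith [ht.2, le_abs_self T, abs_nonneg B]
  · linarith [hB t ht, le_abs_self B, abs_nonneg T]

theorem stmt4_general {X : Type*} [NormedAddCommGroup X] [InnerProductSpace ℝ X]
    (T : ℝ)
    (F : ℝ → X → X) (d : ℝ → X → ℝ)
    (hd : ∀ t ≥ (0:ℝ), ∀ x y : X, (inner ℝ (F t x - F t y) (x - y) : ℝ) ≤ d t y * ‖x - y‖ ^ 2)
    (hd_loc : ∀ R > (0:ℝ), ∃ C : ℝ, ∀ t ∈ Icc (0:ℝ) R, ∀ y : X, ‖y‖ ≤ R → |d t y| ≤ C)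
    (u v : ℝ → X) (v' : ℝ → X)
    (hu : ∀ t ∈ Icc (0:ℝ) T, HasDerivAt u (F t (u t)) t)
    (hv : ∀ t ∈ Icc (0:ℝ) T, HasDerivAt v (v' t) t)
    (E : ℝ → X) (hE : ∀ t ∈ Icc (0:ℝ) T, E t = -v' t + F t (v t))
    (hdint : IntegrableOn (fun t => d t (v t)) (Ioo 0 T))
    (hEint : IntegrableOn (fun t => (inner ℝ (E t) (u t - v t) : ℝ)) (Ioo 0 T)) :
    ∀ t ∈ Icc (0:ℝ) T,
      ‖u t - v t‖ ^ 2 ≤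
        Real.exp (∫ s in (0:ℝ)..t, 2 * d s (v s)) *
          (‖u 0 - v 0‖ ^ 2 +
            2 * ∫ s in (0:ℝ)..t,
              Real.exp (-∫ ξ in (0:ℝ)..s, 2 * d ξ (v ξ)) *
                (inner ℝ (E s) (u s - v s) : ℝ)) := by
  intro t ht
  have hsub : Icc 0 t ⊆ Icc 0 T := Icc_subset_Icc le_rfl ht.2
  have hIcc {g : ℝ → ℝ} (hg : IntegrableOn g (Ioo 0 T)) : IntegrableOn g (Icc 0 t) :=
    ((integrableOn_Icc_iff_integrableOn_Ioo).2 hg).mono_set hsub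
  have hderiv : ∀ s ∈ Icc 0 T, HasDerivAt (fun s ↦ ‖u s - v s‖ ^ 2)
      (2 * inner ℝ (u s - v s) (F s (u s) - v' s)) s :=
    fun s hs ↦ ((hu s hs).sub (hv s hs)).norm_sq
  obtain ⟨C, hC⟩ := exists_abs_le_of_locally_bounded hd_loc
    fun s hs ↦ (hv s hs).continuousAt.continuousWithinAt
  have henergy : ∀ s ∈ Icc 0 T, 2 * inner ℝ (u s - v s) (F s (u s) - v' s) ≤
      2 * d s (v s) * ‖u s - v s‖ ^ 2 + 2 * inner ℝ (E s) (u s - v s) := by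
    intro s hs
    have hsplit : F s (u s) - v' s = (F s (u s) - F s (v s)) + E s := by rw [hE s hs]; abel
    rw [hsplit, inner_add_right, real_inner_comm, real_inner_comm (E s)]
    linarith [hd s hs.1 (u s) (v s)]
  have key := le_exp_integral_mul_of_hasDerivAt_le (K := 2 * C) ht.1
    (fun s hs ↦ (hderiv s (hsub hs)).continuousAt.continuousWithinAt)
    (fun s hs ↦ hderiv s (hsub (Ioo_subset_Icc_self hs)))
    (hIcc (hdint.const_mul 2)) (hIcc (hEint.const_mul 2))
    (fun s hs ↦ by linarith [neg_abs_le (d s (v s)), hC s (hsub hs)])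
    (fun s hs ↦ henergy s (hsub (Ioo_subset_Icc_self hs)))
  have hfactor : ∫ s in (0:ℝ)..t, Real.exp (-∫ ξ in (0:ℝ)..s, 2 * d ξ (v ξ)) *
      (2 * inner ℝ (E s) (u s - v s)) = 2 * ∫ s in (0:ℝ)..t,
        Real.exp (-∫ ξ in (0:ℝ)..s, 2 * d ξ (v ξ)) * inner ℝ (E s) (u s - v s) := by
    rw [← intervalIntegral.integral_const_mul]
    simp only [mul_left_comm]
  rwa [hfactor] at key

/-- The fundamental relative-energy inequality (4.6): if `F` satisfies the
one-sided condition `(F(t,x)-F(t,y), x-y) ≤ d(t,y)‖x-y‖²` with `d` locally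
bounded, `u' = F(t,u)` and `E(t) = -v'(t) + F(t,v(t))`, then
`‖u(t)-v(t)‖² ≤ exp(∫₀ᵗ 2d(s,v(s)) ds)[‖u(0)-v(0)‖²
  + 2∫₀ᵗ exp(-∫₀ˢ 2d(ξ,v(ξ)) dξ)(E(s), u(s)-v(s)) ds]`. -/
theorem stmt4 {X : Type*} [NormedAddCommGroup X] [InnerProductSpace ℝ X]
    [CompleteSpace X] (T : ℝ) (hT : 0 < T)
    (F : ℝ → X → X) (d : ℝ → X → ℝ)
    (hd : ∀ t ≥ (0:ℝ), ∀ x y : X, (inner ℝ (F t x - F t y) (x - y) : ℝ) ≤ d t y * ‖x - y‖ ^ 2)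
    (hd_loc : ∀ R > (0:ℝ), ∃ C : ℝ, ∀ t ∈ Icc (0:ℝ) R, ∀ y : X, ‖y‖ ≤ R → |d t y| ≤ C)
    (u v : ℝ → X) (v' : ℝ → X)
    (hu : ∀ t ∈ Icc (0:ℝ) T, HasDerivAt u (F t (u t)) t)
    (hv : ∀ t ∈ Icc (0:ℝ) T, HasDerivAt v (v' t) t)
    (E : ℝ → X) (hE : ∀ t ∈ Icc (0:ℝ) T, E t = -v' t + F t (v t))
    (hdint : IntegrableOn (fun t => d t (v t)) (Ioo 0 T))
    (hEint : IntegrableOn (fun t => (inner ℝ (E t) (u t - v t) : ℝ)) (Ioo 0 T)) :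
    ∀ t ∈ Icc (0:ℝ) T,
      ‖u t - v t‖ ^ 2 ≤
        Real.exp (∫ s in (0:ℝ)..t, 2 * d s (v s)) *
          (‖u 0 - v 0‖ ^ 2 +
            2 * ∫ s in (0:ℝ)..t,
              Real.exp (-∫ ξ in (0:ℝ)..s, 2 * d ξ (v ξ)) *
                (inner ℝ (E s) (u s - v s) : ℝ)) :=
  stmt4_general T F d hd hd_loc u v v' hu hv E hE hdint hEint
end

section
/- Let X be a real Hilbert space, F : [0,∞) × X → X satisfying (F(t,x) − F(t,y), x − y) ≤ d(t,y)·‖x − y‖² with d locally bounded, and let u_T : [0,T] → X be a differentiable solution of u'(t) = F(t,u(t)), u(0) = a. If u : [0,∞) → X is a dissipative solution with the same initial datum a — i.e., u satisfies inequality (4.6) of the paper for all differentiable test functions v in a class containing u_T — then u(t) = u_T(t) for all t ∈ [0,T]. -/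
open MeasureTheory Set

/-! Test the dissipativity inequality against an extension `v` of the regular solution `u_T`.
On `(0, T)` the residual `E(s, v s) = -v'(s) + F(s, v(s))` vanishes, so the integral term in
(4.6) is zero for `t ≤ T`; as `v 0 = a`, the right-hand side vanishes and `‖u t - v t‖² ≤ 0`. -/

theorem HasDerivAt.unique_of_eqOn {E : Type*} [NormedAddCommGroup E] [NormedSpace ℝ E]
    {f g : ℝ → E} {f' g' : E} {s : Set ℝ} {x : ℝ} (hf : HasDerivAt f f' x)
    (hg : HasDerivAt g g' x) (hs : s ∈ nhds x) (hfg : EqOn f g s) : f' = g' :=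
  hf.unique (hg.congr_of_eventuallyEq (Filter.eventuallyEq_of_mem hs hfg))

theorem residual_eqOn_zero_of_eqOn_solution {X : Type*} [NormedAddCommGroup X]
    [NormedSpace ℝ X] {F : ℝ → X → X} {v w v' : ℝ → X} {a b : ℝ}
    (hv : ∀ s ∈ Ioo a b, HasDerivAt v (v' s) s)
    (hw : ∀ s ∈ Ioo a b, HasDerivAt w (F s (w s)) s) (hvw : EqOn v w (Ioo a b)) :
    EqOn (fun s => -v' s + F s (v s)) 0 (Ioo a b) := by
  intro s hs
  have hderiv : v' s = F s (w s) :=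
    (hv s hs).unique_of_eqOn (hw s hs) (isOpen_Ioo.mem_nhds hs) hvw
  simp [hderiv, hvw hs]

theorem stmt5_general {X : Type*} [NormedAddCommGroup X] [InnerProductSpace ℝ X]
    (T : ℝ) (a : X)
    (F : ℝ → X → X) (d : ℝ → X → ℝ)
    -- the regular solution on [0,T]
    (uT : ℝ → X) (huT : ∀ t ∈ Icc (0:ℝ) T, HasDerivAt uT (F t (uT t)) t)
    (huT0 : uT 0 = a)
    -- the class R of test functions, with their derivatives D v
    (R : Set (ℝ → X)) (D : (ℝ → X) → ℝ → X)
    (hR : ∀ v ∈ R, ∀ t ≥ (0:ℝ), HasDerivAt v (D v t) t)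
    (hmem : ∃ v ∈ R, ∀ t ∈ Icc (0:ℝ) T, v t = uT t)
    -- the dissipative solution with the same initial datum
    (u : ℝ → X)
    (hdiss : ∀ v ∈ R, ∀ t ≥ (0:ℝ),
      ‖u t - v t‖ ^ 2 ≤
        Real.exp (∫ s in (0:ℝ)..t, 2 * d s (v s)) *
          (‖a - v 0‖ ^ 2 +
            2 * ∫ s in (0:ℝ)..t,
              Real.exp (-∫ ξ in (0:ℝ)..s, 2 * d ξ (v ξ)) *
                (inner ℝ (-D v s + F s (v s)) (u s - v s) : ℝ))) :
    ∀ t ∈ Icc (0:ℝ) T, u t = uT t := by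
  obtain ⟨v, hv, hvuT⟩ := hmem
  have hres : EqOn (fun s => -D v s + F s (v s)) 0 (Ioo 0 T) :=
    residual_eqOn_zero_of_eqOn_solution (fun s hs => hR v hv s hs.1.le)
      (fun s hs => huT s (Ioo_subset_Icc_self hs)) fun s hs => hvuT s (Ioo_subset_Icc_self hs)
  rintro t ⟨ht0, htT⟩
  have hint : ∫ s in (0:ℝ)..t, Real.exp (-∫ ξ in (0:ℝ)..s, 2 * d ξ (v ξ)) *
      (inner ℝ (-D v s + F s (v s)) (u s - v s) : ℝ) = 0 := by
    rw [intervalIntegral.integral_congr_Ioo_of_le ht0 (g := fun _ => 0),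
      intervalIntegral.integral_zero]
    intro s hs
    simp [show -D v s + F s (v s) = 0 from hres ⟨hs.1, hs.2.trans_le htT⟩]
  have hv0 : v 0 = a := by rw [hvuT 0 ⟨le_rfl, ht0.trans htT⟩, huT0]
  have hdist := hdiss v hv t ht0
  rw [hint, hv0, sub_self, norm_zero] at hdist
  norm_num at hdist
  rw [← hvuT t ⟨ht0, htT⟩, ← sub_eq_zero]
  exact hdist

/-- Proposition 4.2 a): if a regular (differentiable) solution `u_T` of
`u' = F(t,u)`, `u(0) = a` exists on `[0,T]`, then every dissipative solution
with the same initial datum coincides with `u_T` on `[0,T]`.  A dissipative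
solution is weakly-continuous `u` satisfying inequality (4.6) for every test
function `v` in a class `R` of differentiable functions; the class is assumed
to contain an extension of `u_T`. -/
theorem stmt5 {X : Type*} [NormedAddCommGroup X] [InnerProductSpace ℝ X]
    [CompleteSpace X] (T : ℝ) (hT : 0 < T) (a : X)
    (F : ℝ → X → X) (d : ℝ → X → ℝ)
    (hd : ∀ t ≥ (0:ℝ), ∀ x y : X, (inner ℝ (F t x - F t y) (x - y) : ℝ) ≤ d t y * ‖x - y‖ ^ 2)
    (hd_loc : ∀ R > (0:ℝ), ∃ C : ℝ, ∀ t ∈ Icc (0:ℝ) R, ∀ y : X, ‖y‖ ≤ R → |d t y| ≤ C)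
    -- the regular solution on [0,T]
    (uT : ℝ → X) (huT : ∀ t ∈ Icc (0:ℝ) T, HasDerivAt uT (F t (uT t)) t)
    (huT0 : uT 0 = a)
    -- the class R of test functions, with their derivatives D v
    (R : Set (ℝ → X)) (D : (ℝ → X) → ℝ → X)
    (hR : ∀ v ∈ R, ∀ t ≥ (0:ℝ), HasDerivAt v (D v t) t)
    (hmem : ∃ v ∈ R, ∀ t ∈ Icc (0:ℝ) T, v t = uT t)
    -- the dissipative solution with the same initial datum
    (u : ℝ → X)
    (hu_cont : ∀ φ : X, Continuous fun t => (inner ℝ φ (u t) : ℝ))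
    (hdiss : ∀ v ∈ R, ∀ t ≥ (0:ℝ),
      ‖u t - v t‖ ^ 2 ≤
        Real.exp (∫ s in (0:ℝ)..t, 2 * d s (v s)) *
          (‖a - v 0‖ ^ 2 +
            2 * ∫ s in (0:ℝ)..t,
              Real.exp (-∫ ξ in (0:ℝ)..s, 2 * d ξ (v ξ)) *
                (inner ℝ (-D v s + F s (v s)) (u s - v s) : ℝ))) :
    ∀ t ∈ Icc (0:ℝ) T, u t = uT t :=
  stmt5_general T a F d uT huT huT0 R D hR hmem u hdiss
end
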